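/- Let n ≥ 2, 1 ≤ m ≤ n−1, and K ≥ 2 be integers. Then there exist functions U : {0,1}^m × {0,1}^m × {0,…,K} → ℂ and V : {0,…,K} × {0,1}^{n−m} × {0,1}^{n−m} → ℂ such that for all bit strings σ, τ ∈ {0,1}^n, |F(σ_{1:n}, τ_{1:n}) − Σ_{α=0}^{K} U(σ_{1:m}, τ_{1:m}, α)·V(α, σ_{m+1:n}, τ_{m+1:n})| ≤ 4·(π/2)^{K+1}·e^K·K^{−K} / (K − π/2). In other words, the m-th unfolding matrix of F admits a rank-(K+1) approximation with the stated uniform entrywise error bound. -/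

import Mathlib

/-- The DFT/QFT tensor on `n` bits:
`F(σ,τ) = exp(−πi·Σ_{k,l=1}^n 2^{−k}·2^{l}·σ_k·τ_l)` (indices shifted to be 0-based). -/
noncomputable def dftF (n : ℕ) (σ τ : Fin n → Fin 2) : ℂ :=
  Complex.exp (-(Real.pi : ℂ) * Complex.I *
    ((∑ k : Fin n, ∑ l : Fin n,
      (2 : ℝ) ^ ((l : ℕ) + 1) / (2 : ℝ) ^ ((k : ℕ) + 1) *
        ((σ k : ℕ) : ℝ) * ((τ l : ℕ) : ℝ) : ℝ) : ℂ))


section Aux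
open Finset Nat

noncomputable def xv (m : ℕ) (b : Fin m → Fin 2) : ℝ :=
  ∑ l : Fin m, ((b l : ℕ) : ℝ) * 2 ^ (l : ℕ) / 2 ^ m

noncomputable def yv (r : ℕ) (c : Fin r → Fin 2) : ℝ :=
  ∑ k : Fin r, ((c k : ℕ) : ℝ) / 2 ^ ((k : ℕ) + 1)

lemma sum_split (m r : ℕ) (σ τ : Fin (m + r) → Fin 2) :
    ∃ N : ℕ,
    (∑ k : Fin (m + r), ∑ l : Fin (m + r),
        (2:ℝ) ^ ((l:ℕ)+1) / (2:ℝ) ^ ((k:ℕ)+1) * ((σ k : ℕ):ℝ) * ((τ l : ℕ):ℝ))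
    = (∑ k : Fin m, ∑ l : Fin m,
        (2:ℝ) ^ ((l:ℕ)+1) / (2:ℝ) ^ ((k:ℕ)+1) *
          ((σ (Fin.castAdd r k) : ℕ):ℝ) * ((τ (Fin.castAdd r l) : ℕ):ℝ))
    + (∑ k : Fin r, ∑ l : Fin r,
        (2:ℝ) ^ ((l:ℕ)+1) / (2:ℝ) ^ ((k:ℕ)+1) *
          ((σ (Fin.natAdd m k) : ℕ):ℝ) * ((τ (Fin.natAdd m l) : ℕ):ℝ))
    + 2 * (N : ℝ)
    + 2 * xv m (fun l => τ (Fin.castAdd r l)) * yv r (fun k => σ (Fin.natAdd m k)) := by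
  refine ⟨∑ k : Fin m, ∑ l : Fin r,
    2 ^ (m - 1 - (k:ℕ) + (l:ℕ)) * (σ (Fin.castAdd r k) : ℕ) * (τ (Fin.natAdd m l) : ℕ), ?_⟩
  simp only [Fin.sum_univ_add, Finset.sum_add_distrib]
  have h12 : (∑ k : Fin m, ∑ l : Fin r,
      (2:ℝ) ^ (((Fin.natAdd m l : Fin (m+r)):ℕ)+1) / (2:ℝ) ^ (((Fin.castAdd r k : Fin (m+r)):ℕ)+1) *
        ((σ (Fin.castAdd r k) : ℕ):ℝ) * ((τ (Fin.natAdd m l) : ℕ):ℝ))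
      = 2 * ((∑ k : Fin m, ∑ l : Fin r,
          2 ^ (m - 1 - (k:ℕ) + (l:ℕ)) * (σ (Fin.castAdd r k) : ℕ) * (τ (Fin.natAdd m l) : ℕ) : ℕ) : ℝ) := by
    push_cast
    rw [Finset.mul_sum]
    refine Finset.sum_congr rfl fun k _ => ?_
    rw [Finset.mul_sum]
    refine Finset.sum_congr rfl fun l _ => ?_
    have hk : (k:ℕ) < m := k.isLt
    have he : m + (l:ℕ) + 1 = ((k:ℕ) + 1) + ((m - 1 - (k:ℕ) + (l:ℕ)) + 1) := by omega
    have hpow : (2:ℝ) ^ ((m + (l:ℕ)) + 1) / 2 ^ ((k:ℕ)+1)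
        = 2 * 2 ^ (m - 1 - (k:ℕ) + (l:ℕ)) := by
      rw [show (m + (l:ℕ)) + 1 = ((k:ℕ)+1) + ((m - 1 - (k:ℕ) + (l:ℕ)) + 1) from he,
        pow_add, mul_div_cancel_left₀ _ (by positivity)]
      ring
    simp only [Fin.coe_natAdd, Fin.coe_castAdd]
    rw [hpow]; ring
  have h21 : (∑ k : Fin r, ∑ l : Fin m,
      (2:ℝ) ^ (((Fin.castAdd r l : Fin (m+r)):ℕ)+1) / (2:ℝ) ^ (((Fin.natAdd m k : Fin (m+r)):ℕ)+1) *
        ((σ (Fin.natAdd m k) : ℕ):ℝ) * ((τ (Fin.castAdd r l) : ℕ):ℝ))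
      = 2 * xv m (fun l => τ (Fin.castAdd r l)) * yv r (fun k => σ (Fin.natAdd m k)) := by
    calc (∑ k : Fin r, ∑ l : Fin m,
        (2:ℝ) ^ (((Fin.castAdd r l : Fin (m+r)):ℕ)+1) / (2:ℝ) ^ (((Fin.natAdd m k : Fin (m+r)):ℕ)+1) *
          ((σ (Fin.natAdd m k) : ℕ):ℝ) * ((τ (Fin.castAdd r l) : ℕ):ℝ))
        = ∑ k : Fin r, ∑ l : Fin m,
            (((σ (Fin.natAdd m k) : ℕ):ℝ) / 2 ^ ((k:ℕ)+1)) *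
              (2 * (((τ (Fin.castAdd r l) : ℕ):ℝ) * 2 ^ (l:ℕ) / 2 ^ m)) := by
          refine Finset.sum_congr rfl fun k _ => Finset.sum_congr rfl fun l _ => ?_
          simp only [Fin.coe_natAdd, Fin.coe_castAdd]
          field_simp
          ring
      _ = (∑ k : Fin r, ((σ (Fin.natAdd m k) : ℕ):ℝ) / 2 ^ ((k:ℕ)+1)) *
            (∑ l : Fin m, 2 * (((τ (Fin.castAdd r l) : ℕ):ℝ) * 2 ^ (l:ℕ) / 2 ^ m)) :=
          (Finset.sum_mul_sum _ _ _ _).symm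
      _ = 2 * xv m (fun l => τ (Fin.castAdd r l)) * yv r (fun k => σ (Fin.natAdd m k)) := by
          rw [xv, yv, ← Finset.mul_sum]
          ring
  have h11 : (∑ k : Fin m, ∑ l : Fin m,
      (2:ℝ) ^ (((Fin.castAdd r l : Fin (m+r)):ℕ)+1) / (2:ℝ) ^ (((Fin.castAdd r k : Fin (m+r)):ℕ)+1) *
        ((σ (Fin.castAdd r k) : ℕ):ℝ) * ((τ (Fin.castAdd r l) : ℕ):ℝ))
      = (∑ k : Fin m, ∑ l : Fin m,
        (2:ℝ) ^ ((l:ℕ)+1) / (2:ℝ) ^ ((k:ℕ)+1) *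
          ((σ (Fin.castAdd r k) : ℕ):ℝ) * ((τ (Fin.castAdd r l) : ℕ):ℝ)) := by
    refine Finset.sum_congr rfl fun k _ => Finset.sum_congr rfl fun l _ => ?_
    simp only [Fin.coe_castAdd]
  have h22 : (∑ k : Fin r, ∑ l : Fin r,
      (2:ℝ) ^ (((Fin.natAdd m l : Fin (m+r)):ℕ)+1) / (2:ℝ) ^ (((Fin.natAdd m k : Fin (m+r)):ℕ)+1) *
        ((σ (Fin.natAdd m k) : ℕ):ℝ) * ((τ (Fin.natAdd m l) : ℕ):ℝ))
      = (∑ k : Fin r, ∑ l : Fin r,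
        (2:ℝ) ^ ((l:ℕ)+1) / (2:ℝ) ^ ((k:ℕ)+1) *
          ((σ (Fin.natAdd m k) : ℕ):ℝ) * ((τ (Fin.natAdd m l) : ℕ):ℝ)) := by
    refine Finset.sum_congr rfl fun k _ => Finset.sum_congr rfl fun l _ => ?_
    simp only [Fin.coe_natAdd]
    field_simp
    ring
  rw [h11, h22, h12, h21]
  ring

lemma fin2_le_one (a : Fin 2) : ((a : ℕ) : ℝ) ≤ 1 := by
  have := a.isLt
  exact_mod_cast Nat.lt_succ_iff.mp this

lemma xv_mem (m : ℕ) (b : Fin m → Fin 2) : 0 ≤ xv m b ∧ xv m b ≤ 1 := by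
  constructor
  · apply Finset.sum_nonneg; intro l _; positivity
  · have h1 : xv m b ≤ ∑ l : Fin m, (2:ℝ) ^ (l:ℕ) / 2 ^ m := by
      apply Finset.sum_le_sum; intro l _
      calc ((b l : ℕ):ℝ) * 2 ^ (l:ℕ) / 2 ^ m ≤ 1 * 2 ^ (l:ℕ) / 2 ^ m := by
            gcongr
            exact fin2_le_one (b l)
        _ = 2 ^ (l:ℕ) / 2 ^ m := by ring
    refine h1.trans ?_
    rw [← Finset.sum_div, Fin.sum_univ_eq_sum_range, geom_sum_eq (by norm_num) m]
    rw [div_le_one (by positivity)]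
    norm_num

lemma yv_mem (r : ℕ) (c : Fin r → Fin 2) : 0 ≤ yv r c ∧ yv r c ≤ 1 := by
  constructor
  · apply Finset.sum_nonneg; intro k _; positivity
  · have h1 : yv r c ≤ ∑ k : Fin r, ((1:ℝ)/2) ^ ((k:ℕ)+1) := by
      apply Finset.sum_le_sum; intro k _
      rw [div_pow, one_pow]
      gcongr
      exact fin2_le_one (c k)
    refine h1.trans ?_
    rw [Fin.sum_univ_eq_sum_range (fun i => ((1:ℝ)/2) ^ (i+1)) r]
    have h2 : ∀ s : ℕ, ∑ i ∈ Finset.range s, ((1:ℝ)/2) ^ (i+1) = 1 - (1/2)^s := by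
      intro s
      induction s with
      | zero => simp
      | succ t ih => rw [Finset.sum_range_succ, ih]; ring
    rw [h2]
    have : (0:ℝ) ≤ (1/2)^r := by positivity
    linarith

lemma dft_split (m r : ℕ) (σ τ : Fin (m + r) → Fin 2) :
    dftF (m + r) σ τ =
      dftF m (fun k => σ (Fin.castAdd r k)) (fun k => τ (Fin.castAdd r k)) *
      dftF r (fun k => σ (Fin.natAdd m k)) (fun k => τ (Fin.natAdd m k)) *
      Complex.exp (-(Real.pi : ℂ) * Complex.I *
        ((2 * xv m (fun l => τ (Fin.castAdd r l)) * yv r (fun k => σ (Fin.natAdd m k)) : ℝ) : ℂ)) := by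
  obtain ⟨N, hN⟩ := sum_split m r σ τ
  rw [dftF, dftF, dftF, ← Complex.exp_add, ← Complex.exp_add]
  rw [show (-(Real.pi : ℂ) * Complex.I *
        ((∑ k : Fin (m + r), ∑ l : Fin (m + r),
          (2:ℝ) ^ ((l:ℕ)+1) / (2:ℝ) ^ ((k:ℕ)+1) * ((σ k : ℕ):ℝ) * ((τ l : ℕ):ℝ) : ℝ) : ℂ))
      = (-(Real.pi : ℂ) * Complex.I *
          ((∑ k : Fin m, ∑ l : Fin m, (2:ℝ) ^ ((l:ℕ)+1) / (2:ℝ) ^ ((k:ℕ)+1) *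
            ((σ (Fin.castAdd r k) : ℕ):ℝ) * ((τ (Fin.castAdd r l) : ℕ):ℝ) : ℝ) : ℂ)
        + -(Real.pi : ℂ) * Complex.I *
          ((∑ k : Fin r, ∑ l : Fin r, (2:ℝ) ^ ((l:ℕ)+1) / (2:ℝ) ^ ((k:ℕ)+1) *
            ((σ (Fin.natAdd m k) : ℕ):ℝ) * ((τ (Fin.natAdd m l) : ℕ):ℝ) : ℝ) : ℂ)
        + -(Real.pi : ℂ) * Complex.I *
          ((2 * xv m (fun l => τ (Fin.castAdd r l)) * yv r (fun k => σ (Fin.natAdd m k)) : ℝ) : ℂ))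
        + (-(N:ℂ)) * (2 * (Real.pi:ℂ) * Complex.I) from by
      push_cast [hN]; ring]
  rw [Complex.exp_add,
    show Complex.exp ((-(N:ℂ)) * (2 * (Real.pi:ℂ) * Complex.I)) = 1 from by
      simpa using Complex.exp_int_mul_two_pi_mul_I (-(N:ℤ)), mul_one]


lemma exp_tail (z : ℂ) (K : ℕ) (hK : 2 ≤ K) (hz : ‖z‖ ≤ Real.pi / 2) :
    ‖Complex.exp z - ∑ α ∈ range (K + 1), z ^ α / (α !)‖ ≤
      4 * (Real.pi / 2) ^ (K + 1) * Real.exp (K : ℝ) /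
        (((K : ℝ) ^ K) * ((K : ℝ) - Real.pi / 2)) := by
  set c : ℝ := Real.pi / 2 with hc
  have hc0 : 0 < c := by positivity
  have hcK : c < K := by
    have h1 : Real.pi < 3.15 := Real.pi_lt_d2
    have h2 : (2:ℝ) ≤ K := by exact_mod_cast hK
    simp only [hc]; nlinarith
  clear_value c
  have hexp : Complex.exp z = ∑' n : ℕ, z ^ n / n ! := by
    rw [Complex.exp_eq_exp_ℂ, NormedSpace.exp_eq_tsum_div]
  have hsum : Summable (fun n : ℕ => z ^ n / (n ! : ℂ)) := by
    apply Summable.of_norm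
    have := Real.summable_pow_div_factorial ‖z‖
    refine this.congr fun n => ?_
    simp [norm_div, norm_pow, Complex.norm_natCast]
  have htail : Complex.exp z - ∑ α ∈ range (K + 1), z ^ α / α !
      = ∑' i : ℕ, z ^ (i + (K + 1)) / ((i + (K + 1))! : ℂ) := by
    rw [hexp, ← hsum.sum_add_tsum_nat_add (K + 1)]
    ring
  rw [htail]
  have hb : ∀ i : ℕ, ‖z ^ (i + (K + 1)) / ((i + (K + 1))! : ℂ)‖ ≤
      c ^ (K + 1) / (K + 1)! * (c / (K + 2)) ^ i := by
    intro i
    have h1 : ‖z ^ (i + (K + 1)) / ((i + (K + 1))! : ℂ)‖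
        = ‖z‖ ^ (i + (K + 1)) / ((i + (K + 1))! : ℝ) := by
      simp [norm_div, norm_pow, Complex.norm_natCast]
    rw [h1]
    have hfac : ((K + 1)! : ℝ) * (K + 2) ^ i ≤ ((i + (K + 1))! : ℝ) := by
      have h3 := Nat.factorial_mul_pow_le_factorial (m := K + 1) (n := i)
      have h2 : K + 1 + i = i + (K + 1) := by ring
      have h4 : (K + 1)! * (K + 1 + 1) ^ i ≤ (i + (K + 1))! := h2 ▸ h3
      exact_mod_cast h4
    have hzc : ‖z‖ ^ (i + (K + 1)) ≤ c ^ (i + (K + 1)) :=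
      pow_le_pow_left₀ (norm_nonneg z) hz _
    have hd0 : (0:ℝ) < ((K + 1)! : ℝ) * (K + 2) ^ i := by positivity
    calc ‖z‖ ^ (i + (K + 1)) / ((i + (K + 1))! : ℝ)
        ≤ c ^ (i + (K + 1)) / (((K + 1)! : ℝ) * (K + 2) ^ i) := by
          apply div_le_div₀ (by positivity) hzc hd0 hfac
      _ = c ^ (K + 1) / (K + 1)! * (c / (K + 2)) ^ i := by
          rw [pow_add, div_pow, _root_.div_mul_div_comm]
          ring
  have hr : c / (K + 2) < 1 := by
    rw [div_lt_one (by positivity)]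
    nlinarith
  have hr0 : (0:ℝ) ≤ c / (K + 2) := by positivity
  have hgsum : Summable (fun i : ℕ => c ^ (K + 1) / (K + 1)! * (c / (K + 2)) ^ i) :=
    (summable_geometric_of_lt_one hr0 hr).mul_left _
  have hnorm : ‖∑' i : ℕ, z ^ (i + (K + 1)) / ((i + (K + 1))! : ℂ)‖
      ≤ ∑' i : ℕ, c ^ (K + 1) / (K + 1)! * (c / (K + 2)) ^ i :=
    tsum_of_norm_bounded (hgsum.hasSum) hb
  refine hnorm.trans ?_
  rw [tsum_mul_left, tsum_geometric_of_lt_one hr0 hr]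
  have hKfac : (K:ℝ) ^ K ≤ Real.exp K * (K !) := by
    have h1 : (K:ℝ) ^ K / K ! ≤ Real.exp K :=
      le_trans (Finset.single_le_sum (f := fun i => (K:ℝ) ^ i / i !)
          (fun i _ => by positivity) (by simp : K ∈ range (K + 1)))
        (Real.sum_le_exp_of_nonneg (by positivity) _)
    have h2 : (0:ℝ) < K ! := by positivity
    calc (K:ℝ) ^ K = (K:ℝ) ^ K / K ! * K ! := by field_simp
      _ ≤ Real.exp K * K ! := mul_le_mul_of_nonneg_right h1 h2.le
  have hK2 : (2:ℝ) ≤ K := by exact_mod_cast hK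
  have hKc : (0:ℝ) < (K:ℝ) - c := by linarith
  have hfacpos : (0:ℝ) < (K !:ℝ) := by positivity
  have hepos : (0:ℝ) < Real.exp K := Real.exp_pos _
  have hfac1 : ((K + 1)! : ℝ) = (K + 1) * K ! := by
    push_cast [Nat.factorial_succ]; ring
  have hinv : (1 - c / (K + 2))⁻¹ = ((K:ℝ) + 2) / ((K:ℝ) + 2 - c) := by
    rw [inv_eq_one_div, div_eq_div_iff (by nlinarith) (by nlinarith)]
    field_simp
  have hd1 : (0:ℝ) < ((K:ℝ)+1)*(K !:ℝ)*((K:ℝ)+2-c) := by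
    apply mul_pos (by positivity); linarith
  have hd2 : (0:ℝ) < (K:ℝ)^K*((K:ℝ)-c) := mul_pos (by positivity) hKc
  rw [hfac1, hinv, _root_.div_mul_div_comm, div_le_div_iff₀ hd1 hd2]
  have key : ((K:ℝ)+2)*((K:ℝ)-c) ≤ 4*((K:ℝ)+1)*((K:ℝ)+2-c) := by nlinarith
  nlinarith [mul_le_mul_of_nonneg_left hKfac
      (mul_nonneg (mul_nonneg (pow_pos hc0 (K+1)).le (by positivity : (0:ℝ) ≤ (K:ℝ)+2)) hKc.le),
    mul_le_mul_of_nonneg_left key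
      (by positivity : (0:ℝ) ≤ c^(K+1) * Real.exp K * (K !:ℝ))]

lemma main_step (m r K : ℕ) (hK : 2 ≤ K)
    (exp_tail : ∀ z : ℂ, ‖z‖ ≤ Real.pi / 2 →
      ‖Complex.exp z - ∑ α ∈ range (K + 1), z ^ α / (α !)‖ ≤
        4 * (Real.pi / 2) ^ (K + 1) * Real.exp (K : ℝ) /
          (((K : ℝ) ^ K) * ((K : ℝ) - Real.pi / 2)))
    (dft_split : ∀ σ τ : Fin (m + r) → Fin 2,
      dftF (m + r) σ τ =
        dftF m (fun k => σ (Fin.castAdd r k)) (fun k => τ (Fin.castAdd r k)) *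
        dftF r (fun k => σ (Fin.natAdd m k)) (fun k => τ (Fin.natAdd m k)) *
        Complex.exp (-(Real.pi : ℂ) * Complex.I *
          ((2 * xv m (fun l => τ (Fin.castAdd r l)) * yv r (fun k => σ (Fin.natAdd m k)) : ℝ) : ℂ)))
    (xv_mem : ∀ b : Fin m → Fin 2, 0 ≤ xv m b ∧ xv m b ≤ 1)
    (yv_mem : ∀ c : Fin r → Fin 2, 0 ≤ yv r c ∧ yv r c ≤ 1) :
    ∃ (U : (Fin m → Fin 2) → (Fin m → Fin 2) → Fin (K + 1) → ℂ)
      (V : Fin (K + 1) → (Fin r → Fin 2) → (Fin r → Fin 2) → ℂ),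
      ∀ σ τ : Fin (m + r) → Fin 2,
        ‖dftF (m + r) σ τ -
            ∑ α : Fin (K + 1),
              U (fun k => σ (Fin.castAdd r k)) (fun k => τ (Fin.castAdd r k)) α *
                V α (fun k => σ (Fin.natAdd m k)) (fun k => τ (Fin.natAdd m k))‖ ≤
          4 * (Real.pi / 2) ^ (K + 1) * Real.exp (K : ℝ) /
            (((K : ℝ) ^ K) * ((K : ℝ) - Real.pi / 2)) := by
  refine ⟨fun a b α => dftF m a b *
      Complex.exp (-(Real.pi : ℂ) * Complex.I * ((1/2 : ℝ) : ℂ)) *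
      Complex.exp (-(Real.pi : ℂ) * Complex.I * ((xv m b - 1/2 : ℝ) : ℂ)) *
      ((-2 * (Real.pi : ℂ) * Complex.I * ((xv m b - 1/2 : ℝ) : ℂ)) ^ (α : ℕ) / ((α : ℕ)! : ℂ)),
    fun α c d => dftF r c d *
      Complex.exp (-(Real.pi : ℂ) * Complex.I * ((yv r c - 1/2 : ℝ) : ℂ)) *
      (((yv r c - 1/2 : ℝ) : ℂ) ^ (α : ℕ)), ?_⟩
  intro σ τ
  set a : Fin m → Fin 2 := fun k => σ (Fin.castAdd r k) with ha
  set b : Fin m → Fin 2 := fun k => τ (Fin.castAdd r k) with hb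
  set c : Fin r → Fin 2 := fun k => σ (Fin.natAdd m k) with hc
  set d : Fin r → Fin 2 := fun k => τ (Fin.natAdd m k) with hd
  set x : ℝ := xv m b with hx
  set y : ℝ := yv r c with hy
  set z : ℂ := (-2 * (Real.pi : ℂ) * Complex.I * ((x - 1/2 : ℝ) : ℂ)) * ((y - 1/2 : ℝ) : ℂ) with hz
  set W : ℂ := dftF m a b * dftF r c d *
      Complex.exp (-(Real.pi : ℂ) * Complex.I * ((1/2 : ℝ) : ℂ)) *
      Complex.exp (-(Real.pi : ℂ) * Complex.I * ((x - 1/2 : ℝ) : ℂ)) *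
      Complex.exp (-(Real.pi : ℂ) * Complex.I * ((y - 1/2 : ℝ) : ℂ)) with hW
  have hexp2 : Complex.exp (-(Real.pi : ℂ) * Complex.I * ((2 * x * y : ℝ) : ℂ))
      = Complex.exp (-(Real.pi : ℂ) * Complex.I * ((1/2 : ℝ) : ℂ)) *
        Complex.exp (-(Real.pi : ℂ) * Complex.I * ((x - 1/2 : ℝ) : ℂ)) *
        Complex.exp (-(Real.pi : ℂ) * Complex.I * ((y - 1/2 : ℝ) : ℂ)) *
        Complex.exp z := by
    rw [← Complex.exp_add, ← Complex.exp_add, ← Complex.exp_add]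
    congr 1
    rw [hz]
    push_cast
    ring
  have hsum2 : (∑ α : Fin (K + 1),
      (dftF m a b * Complex.exp (-(Real.pi : ℂ) * Complex.I * ((1/2 : ℝ) : ℂ)) *
        Complex.exp (-(Real.pi : ℂ) * Complex.I * ((x - 1/2 : ℝ) : ℂ)) *
        ((-2 * (Real.pi : ℂ) * Complex.I * ((x - 1/2 : ℝ) : ℂ)) ^ (α : ℕ) / ((α : ℕ)! : ℂ))) *
      (dftF r c d * Complex.exp (-(Real.pi : ℂ) * Complex.I * ((y - 1/2 : ℝ) : ℂ)) *
        (((y - 1/2 : ℝ) : ℂ) ^ (α : ℕ))))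
      = W * ∑ α ∈ range (K + 1), z ^ α / (α ! : ℂ) := by
    rw [← Fin.sum_univ_eq_sum_range (fun j => z ^ j / (j ! : ℂ)) (K + 1), Finset.mul_sum]
    refine Finset.sum_congr rfl fun α _ => ?_
    rw [hz, mul_pow, hW]
    ring
  have hmain : dftF (m + r) σ τ -
      ∑ α : Fin (K + 1),
        (dftF m a b * Complex.exp (-(Real.pi : ℂ) * Complex.I * ((1/2 : ℝ) : ℂ)) *
          Complex.exp (-(Real.pi : ℂ) * Complex.I * ((x - 1/2 : ℝ) : ℂ)) *
          ((-2 * (Real.pi : ℂ) * Complex.I * ((x - 1/2 : ℝ) : ℂ)) ^ (α : ℕ) / ((α : ℕ)! : ℂ))) *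
        (dftF r c d * Complex.exp (-(Real.pi : ℂ) * Complex.I * ((y - 1/2 : ℝ) : ℂ)) *
          (((y - 1/2 : ℝ) : ℂ) ^ (α : ℕ)))
      = W * (Complex.exp z - ∑ α ∈ range (K + 1), z ^ α / (α ! : ℂ)) := by
    rw [hsum2, dft_split σ τ, ← hb, ← hc, ← hx, ← hy, hexp2, hW]
    ring
  calc ‖dftF (m + r) σ τ - ∑ α : Fin (K + 1), _‖
      = ‖W‖ * ‖Complex.exp z - ∑ α ∈ range (K + 1), z ^ α / (α ! : ℂ)‖ := by
        rw [hmain, norm_mul]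
    _ ≤ _ := by
        have habs1 : ∀ s : ℝ, ‖Complex.exp (-(Real.pi:ℂ) * Complex.I * (s:ℂ))‖ = 1 := by
          intro s
          rw [Complex.norm_exp]
          norm_num [Complex.mul_re, Complex.mul_im]
        have hWabs : ‖W‖ = 1 := by
          rw [hW, dftF, dftF, norm_mul, norm_mul, norm_mul, norm_mul,
            habs1, habs1, habs1, habs1, habs1]
          norm_num
        rw [hWabs, one_mul]
        apply exp_tail
        have hu : |x - 1/2| ≤ 1/2 := by
          obtain ⟨h1, h2⟩ := xv_mem b
          rw [abs_le]; constructor <;> [linarith; linarith]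
        have hv : |y - 1/2| ≤ 1/2 := by
          obtain ⟨h1, h2⟩ := yv_mem c
          rw [abs_le]; constructor <;> [linarith; linarith]
        have habsz : ‖z‖ = 2 * Real.pi * |x - 1/2| * |y - 1/2| := by
          rw [hz]
          simp only [norm_mul, Complex.norm_real, Real.norm_eq_abs, Complex.norm_I,
            show ‖(-2 : ℂ)‖ = 2 from by norm_num, mul_one]
          rw [abs_of_pos Real.pi_pos]
        rw [habsz]
        have h4 : |x - 1/2| * |y - 1/2| ≤ 1/4 := by
          calc |x - 1/2| * |y - 1/2| ≤ (1/2) * (1/2) :=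
                mul_le_mul hu hv (abs_nonneg _) (by norm_num)
            _ = 1/4 := by norm_num
        nlinarith [Real.pi_pos, h4]

end Aux

/-- The `m`-th unfolding matrix of the QFT tensor admits a rank-`(K+1)`
approximation with uniform entrywise error at most `4·(π/2)^(K+1)·e^K·K^(−K)/(K − π/2)`. -/
theorem unfolding_low_rank (n m K : ℕ) (hn : 2 ≤ n) (hm1 : 1 ≤ m) (hm2 : m ≤ n - 1)
    (hK : 2 ≤ K) :
    ∃ (U : (Fin m → Fin 2) → (Fin m → Fin 2) → Fin (K + 1) → ℂ)
      (V : Fin (K + 1) → (Fin (n - m) → Fin 2) → (Fin (n - m) → Fin 2) → ℂ),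
      ∀ σ τ : Fin n → Fin 2,
        ‖dftF n σ τ -
            ∑ α : Fin (K + 1),
              U (fun k => σ ⟨k, by have := k.2; omega⟩)
                  (fun k => τ ⟨k, by have := k.2; omega⟩) α *
                V α (fun k => σ ⟨m + k, by have := k.2; omega⟩)
                  (fun k => τ ⟨m + k, by have := k.2; omega⟩)‖ ≤
          4 * (Real.pi / 2) ^ (K + 1) * Real.exp (K : ℝ) /
            (((K : ℝ) ^ K) * ((K : ℝ) - Real.pi / 2)) := by
  have hmr : m + (n - m) = n := by omega
  obtain ⟨U, V, h⟩ := main_step m (n - m) K hK (fun z hz => exp_tail z K hK hz)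
    (dft_split m (n - m)) (xv_mem m) (yv_mem (n - m))
  refine ⟨U, V, fun σ τ => ?_⟩
  have hs : (∑ k : Fin n, ∑ l : Fin n,
        (2:ℝ) ^ ((l:ℕ)+1) / (2:ℝ) ^ ((k:ℕ)+1) * ((σ k : ℕ):ℝ) * ((τ l : ℕ):ℝ))
      = ∑ k : Fin (m + (n - m)), ∑ l : Fin (m + (n - m)),
        (2:ℝ) ^ ((l:ℕ)+1) / (2:ℝ) ^ ((k:ℕ)+1) *
          ((σ (Fin.cast hmr k) : ℕ):ℝ) * ((τ (Fin.cast hmr l) : ℕ):ℝ) := by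
    rw [← Fin.sum_congr' (fun k : Fin n => ∑ l : Fin n,
      (2:ℝ) ^ ((l:ℕ)+1) / (2:ℝ) ^ ((k:ℕ)+1) * ((σ k : ℕ):ℝ) * ((τ l : ℕ):ℝ)) hmr]
    refine Finset.sum_congr rfl fun k _ => ?_
    rw [← Fin.sum_congr' (fun l : Fin n =>
      (2:ℝ) ^ ((l:ℕ)+1) / (2:ℝ) ^ (((Fin.cast hmr k : Fin n):ℕ)+1) *
        ((σ (Fin.cast hmr k) : ℕ):ℝ) * ((τ l : ℕ):ℝ)) hmr]
    simp only [Fin.coe_cast]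
  have hd : dftF n σ τ = dftF (m + (n - m))
      (fun k => σ (Fin.cast hmr k)) (fun k => τ (Fin.cast hmr k)) := by
    rw [dftF, dftF, hs]
  rw [hd]
  exact h (fun k => σ (Fin.cast hmr k)) (fun k => τ (Fin.cast hmr k))
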